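/- arXiv:2205.06128 — 3 statements merged into one kernel-verified Lean document; each statement's English description precedes it below -/
import Mathlib

section
/- Let G be a bipartite planar graph whose vertex set is partitioned into a set of k 'big' vertices and a set of ℓ 'critical' vertices, with every edge joining a big vertex to a critical vertex, and suppose every critical vertex has degree at least 3. Then ℓ ≤ 2k − 4. -/
/-- `H` is a minor of `G`. -/
def SimpleGraph.IsMinorOf {α β : Type*} (H : SimpleGraph β) (G : SimpleGraph α) : Prop :=
  ∃ f : β → Set α,
    (∀ b, (f b).Nonempty) ∧
    (∀ b b', b ≠ b' → Disjoint (f b) (f b')) ∧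
    (∀ b, (G.induce (f b)).Connected) ∧
    (∀ b b', H.Adj b b' → ∃ u ∈ f b, ∃ v ∈ f b', G.Adj u v)

/-- A graph is planar iff it has neither a `K₅` nor a `K₃,₃` minor (Wagner's theorem). -/
def SimpleGraph.IsPlanar {α : Type*} (G : SimpleGraph α) : Prop :=
  ¬ (completeGraph (Fin 5)).IsMinorOf G ∧
  ¬ (completeBipartiteGraph (Fin 3) (Fin 3)).IsMinorOf G

/-!
Every critical vertex has three neighbours among the big ones, so it suffices to show: in a
graph with no `K₃,₃` minor, a set `B` of vertices outside a finite set `A`, each with at least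
three neighbours in `A`, has at most `2|A| - 4` elements. Keep exactly three such edges at every
vertex of `B` and induct on `|A|`.

* If two vertices `x ≠ y` of `A` have three or more common neighbours in `B`, delete `x`, `y` and
  these common neighbours. If `A \ {x, y}` lies in a single component, that component, `x`, `y`
  and three common neighbours are the branch sets of a `K₃,₃` minor. Otherwise every component
  `C`, with `x` and `y` put back, is a smaller instance, so it carries at most
  `2(|A ∩ C| + 2) - 4` vertices of `B`; summing gives `|B| ≤ 2(|A| - 2)`.
* If some pair `x ≠ y` has exactly two common neighbours `b₀, b₁`, contract `{b₀, x, y}` to one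
  vertex and discard `b₀, b₁`; if no pair has two common neighbours, contract `b₀` together with
  all its neighbours. A contraction creates no `K₃,₃` minor, and every remaining vertex of `B`
  still sees three vertices of the smaller set `A`.
-/

open Finset Function

namespace SimpleGraph

open scoped Classical

local notation "K₃₃" => completeBipartiteGraph (Fin 3) (Fin 3)

variable {V W ι κ : Type*} {G G' : SimpleGraph V} {A B : Finset V}

theorem Reachable.eq_of_forall_not_adj {u v : V} (h : G.Reachable u v) (hu : ∀ w, ¬ G.Adj u w) :
    u = v := by
  obtain ⟨p⟩ := h
  cases p with
  | nil => rfl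
  | cons h _ => exact absurd h (hu _)

theorem IsMinorOf.mono {H : SimpleGraph ι} (hle : G ≤ G') (h : H.IsMinorOf G) :
    H.IsMinorOf G' := by
  obtain ⟨f, hne, hdisj, hconn, hadj⟩ := h
  refine ⟨f, hne, hdisj, fun i => (hconn i).mono (comap_monotone _ hle), fun i j hij => ?_⟩
  obtain ⟨u, hu, v, hv, huv⟩ := hadj i j hij
  exact ⟨u, hu, v, hv, hle huv⟩

theorem induce_preimage_preconnected {π : V → W} (hπ : ∀ w, (G.induce (π ⁻¹' {w})).Preconnected)
    {s : Set W} (hs : ((G.map π).induce s).Preconnected) :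
    (G.induce (π ⁻¹' s)).Preconnected := by
  have hfiber : ∀ a b : π ⁻¹' s, π a = π b → (G.induce (π ⁻¹' s)).Reachable a b := by
    rintro ⟨a, ha⟩ ⟨b, hb⟩ hab
    have hsub : π ⁻¹' {π a} ⊆ π ⁻¹' s := Set.preimage_mono (Set.singleton_subset_iff.2 ha)
    exact (hπ (π a) ⟨a, rfl⟩ ⟨b, hab.symm⟩).map (G.induceHomOfLE hsub).toHom
  have hlift : ∀ {u v : s} (p : ((G.map π).induce s).Walk u v) (a b : π ⁻¹' s),
      π a = u → π b = v → (G.induce (π ⁻¹' s)).Reachable a b := by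
    intro u v p
    induction p with
    | nil => intro a b ha hb; exact hfiber a b (ha.trans hb.symm)
    | @cons u v w huv p ih =>
      intro a b ha hb
      obtain ⟨-, a', b', hab', ha', hb'⟩ := huv
      have ha's : a' ∈ π ⁻¹' s := by simp [Set.mem_preimage, ha']
      have hb's : b' ∈ π ⁻¹' s := by simp [Set.mem_preimage, hb']
      exact (hfiber a ⟨a', ha's⟩ (ha.trans ha'.symm)).trans
        ((Adj.reachable (G := G.induce _) (u := ⟨a', ha's⟩) (v := ⟨b', hb's⟩) hab').trans
          (ih ⟨b', hb's⟩ b hb' hb))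
  intro a b
  exact hlift (hs ⟨π a, a.2⟩ ⟨π b, b.2⟩).some a b rfl rfl

/-- Vertices outside the range of `π` are isolated in `G.map π`, so they cannot carry a branch
set of a minor without isolated vertices. -/
theorem IsMinorOf.of_map {H : SimpleGraph ι} {π : V → W} (hH : ∀ i, ∃ j, H.Adj i j)
    (hπ : ∀ w, (G.induce (π ⁻¹' {w})).Preconnected) (h : H.IsMinorOf (G.map π)) :
    H.IsMinorOf G := by
  obtain ⟨f, -, hdisj, hconn, hadj⟩ := h
  have hne : ∀ i, (π ⁻¹' f i).Nonempty := by
    intro i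
    obtain ⟨j, hij⟩ := hH i
    obtain ⟨u, hu, v, -, -, a, -, -, rfl, -⟩ := hadj i j hij
    exact ⟨a, hu⟩
  refine ⟨fun i => π ⁻¹' f i, hne, fun i j hij => (hdisj i j hij).preimage π, fun i => ?_,
    fun i j hij => ?_⟩
  · have := (hne i).to_subtype
    exact ⟨induce_preimage_preconnected hπ (hconn i).preconnected⟩
  · obtain ⟨u, hu, v, hv, -, a, b, hab, rfl, rfl⟩ := hadj i j hij
    exact ⟨a, hu, b, hv, hab⟩

theorem completeBipartiteGraph_isMinorOf {L : ι → Set V} {r : κ → V}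
    (hL : ∀ i, (G.induce (L i)).Connected) (hLdisj : Pairwise (Disjoint on L))
    (hr : Injective r) (hrL : ∀ i j, r j ∉ L i) (hadj : ∀ i j, ∃ u ∈ L i, G.Adj u (r j)) :
    (completeBipartiteGraph ι κ).IsMinorOf G := by
  refine ⟨Sum.elim L fun j => {r j}, ?_, ?_, ?_, ?_⟩
  · rintro (i | j)
    · exact Set.nonempty_coe_sort.1 (hL i).nonempty
    · exact Set.singleton_nonempty _
  · rintro (i | j) (i' | j') h
    · exact hLdisj (by simpa using h)
    · simpa using hrL i j'
    · simpa using hrL i' j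
    · simpa using hr.ne (by simpa using h)
  · rintro (i | j)
    · exact hL i
    · show (G.induce {r j}).Connected
      rw [induce_singleton_eq_top]
      exact connected_top
  · rintro (i | j) (i' | j') h <;> simp at h
    · obtain ⟨u, hu, huv⟩ := hadj i j'
      exact ⟨u, hu, r j', rfl, huv⟩
    · obtain ⟨u, hu, huv⟩ := hadj i' j
      exact ⟨r j, rfl, u, hu, huv.symm⟩

theorem completeBipartiteGraph_isMinorOf_of_pair {x y : V} {C : Set V} {r : Fin 3 → V}
    (hxy : x ≠ y) (hC : (G.induce C).Connected) (hxC : x ∉ C) (hyC : y ∉ C) (hr : Injective r)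
    (hrx : ∀ j, r j ≠ x) (hry : ∀ j, r j ≠ y) (hrC : ∀ j, r j ∉ C)
    (hadj : ∀ j, G.Adj x (r j) ∧ G.Adj y (r j) ∧ ∃ u ∈ C, G.Adj u (r j)) :
    (K₃₃).IsMinorOf G := by
  refine completeBipartiteGraph_isMinorOf (L := ![{x}, {y}, C]) ?_ ?_ hr ?_ ?_
  · intro i
    fin_cases i
    · simp
    · simp
    · exact hC
  · intro i j hij
    fin_cases i <;> fin_cases j <;>
      simp_all [onFun, Set.disjoint_singleton_left, Set.disjoint_singleton_right, eq_comm]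
  · intro i j
    fin_cases i
    exacts [hrx j, hry j, hrC j]
  · intro i j
    obtain ⟨hx, hy, hC⟩ := hadj j
    fin_cases i
    exacts [⟨x, rfl, hx⟩, ⟨y, rfl, hy⟩, hC]

noncomputable def collapse (X : Set V) (x v : V) : V := if v ∈ X then x else v

theorem collapse_of_notMem {X : Set V} {v : V} (x : V) (hv : v ∉ X) : collapse X x v = v :=
  if_neg hv

theorem collapse_of_mem {X : Set V} {v : V} (x : V) (hv : v ∈ X) : collapse X x v = x :=
  if_pos hv

theorem injOn_collapse {X s : Set V} {x : V} (hx : x ∈ X) (hs : (s ∩ X).Subsingleton) :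
    Set.InjOn (collapse X x) s := by
  intro a ha b hb hab
  by_cases haX : a ∈ X <;> by_cases hbX : b ∈ X <;>
    simp only [collapse, haX, hbX, if_true, if_false] at hab
  · exact hs ⟨ha, haX⟩ ⟨hb, hbX⟩
  · exact absurd (hab ▸ hx) hbX
  · exact absurd (hab ▸ hx) haX
  · exact hab

theorem preconnected_induce_collapse_fiber {X : Set V} {x : V} (hx : x ∈ X)
    (hX : (G.induce X).Preconnected) (w : V) :
    (G.induce (collapse X x ⁻¹' {w})).Preconnected := by
  by_cases hw : w = x
  · have hfiber : collapse X x ⁻¹' {w} = X := by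
      ext v
      by_cases hv : v ∈ X <;> simp [collapse, hv, hw]
      rintro rfl; exact hv hx
    rw [hfiber]; exact hX
  · rintro ⟨a, ha⟩ ⟨b, hb⟩
    have hsub : ∀ v ∈ collapse X x ⁻¹' {w}, v = w := by
      intro v hv
      by_cases hvX : v ∈ X <;> simp_all [collapse]
    obtain rfl := (hsub a ha).trans (hsub b hb).symm
    rfl

theorem preconnected_induce_insert_of_adj {c : V} {T : Set V} (hT : ∀ t ∈ T, G.Adj c t) :
    (G.induce (insert c T)).Preconnected := by
  have hc : ∀ v : ↥(insert c T), (G.induce (insert c T)).Reachable ⟨c, Set.mem_insert _ _⟩ v := by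
    rintro ⟨v, rfl | hv⟩
    · rfl
    · exact Adj.reachable (G := G.induce _) (hT v hv)
  exact fun u v => (hc u).symm.trans (hc v)

theorem card_filter_adj_le_card_filter_map_adj {π : V → V} {b : V} {s A' : Finset V}
    (hinj : Set.InjOn π ↑({a ∈ s | G.Adj b a} : Finset V)) (hmaps : ∀ a ∈ s, π a ∈ A')
    (hb : π b = b) (hbA' : b ∉ A') :
    #{a ∈ s | G.Adj b a} ≤ #{a ∈ A' | (G.map π).Adj b a} := by
  rw [← card_image_of_injOn hinj]
  refine card_le_card fun a' ha' => ?_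
  obtain ⟨a, ha, rfl⟩ := mem_image.1 ha'
  obtain ⟨has, hba⟩ := mem_filter.1 ha
  refine mem_filter.2 ⟨hmaps a has, ?_⟩
  rw [← hb]
  exact map_adj_apply' hba fun h => hbA' ((h.symm.trans hb) ▸ hmaps a has)

theorem card_filter_adj_le_card_filter_map_collapse_adj {b₀ b x : V} {T : Finset V}
    (hb₀ : b₀ ∉ A) (hb : b ∉ A) (hbb₀ : b ≠ b₀) (hTA : T ⊆ A) (hx : x ∈ T)
    (hbT : ∀ u ∈ T, ∀ v ∈ T, G.Adj b u → G.Adj b v → u = v) :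
    #{a ∈ A | G.Adj b a} ≤ #{a ∈ A \ T.erase x | (G.map (collapse (insert b₀ ↑T) x)).Adj b a} := by
  have hXT : ∀ a ∈ A, a ∈ insert b₀ (T : Set V) → a ∈ T := fun a ha haX =>
    haX.resolve_left fun h => hb₀ (h ▸ ha)
  have hbX : b ∉ insert b₀ (T : Set V) := by
    rintro (h | h)
    exacts [hbb₀ h, hb (hTA h)]
  refine card_filter_adj_le_card_filter_map_adj ?_ ?_ (collapse_of_notMem x hbX)
    fun h => hb (sdiff_subset h)
  · refine injOn_collapse (Set.mem_insert_of_mem _ hx) fun u ⟨hu, huX⟩ v ⟨hv, hvX⟩ => ?_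
    obtain ⟨huA, hbu⟩ := mem_filter.1 (mem_coe.1 hu)
    obtain ⟨hvA, hbv⟩ := mem_filter.1 (mem_coe.1 hv)
    exact hbT u (hXT u huA huX) v (hXT v hvA hvX) hbu hbv
  · intro a ha
    by_cases haX : a ∈ insert b₀ (T : Set V)
    · rw [collapse_of_mem _ haX]
      exact mem_sdiff.2 ⟨hTA hx, fun h => (mem_erase.1 h).1 rfl⟩
    · rw [collapse_of_notMem _ haX]
      exact mem_sdiff.2 ⟨ha, fun h => haX (Set.mem_insert_of_mem _ (mem_of_mem_erase h))⟩

variable (V) in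
def BoundBelow (n : ℕ) : Prop :=
  ∀ (G : SimpleGraph V) (A B : Finset V), #A < n → ¬ (K₃₃).IsMinorOf G → Disjoint A B →
    (∀ b ∈ B, 3 ≤ #{a ∈ A | G.Adj b a}) → #B ≤ 2 * #A - 4

theorem exists_le_card_filter_adj_eq_three (hAB : Disjoint A B)
    (hdeg : ∀ b ∈ B, 3 ≤ #{a ∈ A | G.Adj b a}) :
    ∃ G₀ ≤ G, (∀ b ∈ B, ∀ v, G₀.Adj b v → v ∈ A) ∧ ∀ b ∈ B, #{a ∈ A | G₀.Adj b a} = 3 := by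
  choose! N hNsub hN3 using fun b hb => exists_subset_card_eq (hdeg b hb)
  have hNA : ∀ b ∈ B, N b ⊆ A := fun b hb => (hNsub b hb).trans (filter_subset _ _)
  have hNadj : ∀ b ∈ B, ∀ a ∈ N b, G.Adj b a := fun b hb a ha => (mem_filter.1 (hNsub b hb ha)).2
  set G₀ := fromRel fun b a => b ∈ B ∧ a ∈ N b
  have hG₀ : ∀ b ∈ B, ∀ v, G₀.Adj b v ↔ v ∈ N b := by
    intro b hb v
    refine ⟨?_, fun hv => ⟨(hNadj b hb v hv).ne, Or.inl ⟨hb, hv⟩⟩⟩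
    rintro ⟨-, ⟨-, hv⟩ | ⟨hv, hbv⟩⟩
    · exact hv
    · exact absurd hb (Finset.disjoint_left.1 hAB (hNA v hv hbv))
  refine ⟨G₀, ?_, fun b hb v hv => hNA b hb ((hG₀ b hb v).1 hv), fun b hb => ?_⟩
  · rintro u v ⟨-, ⟨hu, hv⟩ | ⟨hv, hu⟩⟩
    · exact hNadj u hu v hv
    · exact (hNadj v hv u hu).symm
  · rw [← hN3 b hb]
    congr 1
    ext a
    simp only [mem_filter, hG₀ b hb]
    exact ⟨And.right, fun ha => ⟨hNA b hb ha, ha⟩⟩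

/-- Each class of `κ`, together with `S`, is a smaller instance: a vertex of `B` sees only
vertices of `S` and of its own class. -/
theorem card_le_two_mul_card_sdiff_of_labelling {S : Finset V} (IH : BoundBelow V #A)
    (hG : ¬ (K₃₃).IsMinorOf G) (hAB : Disjoint A B) (hdeg : ∀ b ∈ B, 3 ≤ #{a ∈ A | G.Adj b a})
    (hSA : S ⊆ A) (hS : #S ≤ 2) (κ : V → ι)
    (hκ : ∀ b ∈ B, ∀ a ∈ A \ S, G.Adj b a → κ a = κ b) (hsplit : ∀ t, ∃ a ∈ A \ S, κ a ≠ t) :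
    #B ≤ 2 * #(A \ S) := by
  have hpiece : ∀ t, #{b ∈ B | κ b = t} ≤ 2 * #{a ∈ A \ S | κ a = t} := by
    intro t
    set At := {a ∈ A \ S | κ a = t}
    have hdisj : Disjoint S At := disjoint_sdiff.mono_right (filter_subset _ _)
    have hlt : #At < #(A \ S) := by
      obtain ⟨a, ha, hat⟩ := hsplit t
      exact card_lt_card (filter_ssubset.2 ⟨a, ha, hat⟩)
    have hA : #(A \ S) + #S = #A := card_sdiff_add_card_eq_card hSA
    have hsub : S ∪ At ⊆ A := union_subset hSA ((filter_subset _ _).trans sdiff_subset)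
    have := IH G (S ∪ At) {b ∈ B | κ b = t} (by rw [card_union_of_disjoint hdisj]; omega) hG
      (hAB.mono hsub (filter_subset _ _)) fun b hb => by
        obtain ⟨hbB, rfl⟩ := mem_filter.1 hb
        refine (hdeg b hbB).trans (card_le_card fun a ha => ?_)
        obtain ⟨haA, hab⟩ := mem_filter.1 ha
        refine mem_filter.2 ⟨?_, hab⟩
        by_cases haS : a ∈ S
        · exact mem_union_left _ haS
        · have haAS : a ∈ A \ S := mem_sdiff.2 ⟨haA, haS⟩
          exact mem_union_right _ (mem_filter.2 ⟨haAS, hκ b hbB a haAS hab⟩)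
    rw [card_union_of_disjoint hdisj] at this
    omega
  calc #B = ∑ t ∈ B.image κ, #{b ∈ B | κ b = t} := card_eq_sum_card_image κ B
    _ ≤ ∑ t ∈ B.image κ, 2 * #{a ∈ A \ S | κ a = t} := sum_le_sum fun t _ => hpiece t
    _ = 2 * #{a ∈ A \ S | κ a ∈ B.image κ} := by
      rw [← mul_sum]
      exact congrArg (2 * ·) (sum_card_fiberwise_eq_card_filter _ _ _)
    _ ≤ 2 * #(A \ S) := Nat.mul_le_mul_left 2 (card_filter_le _ _)

/-- A vertex of `P` is deleted together with `S`, but labelled by the component of its unique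
neighbour outside `S`. -/
theorem card_le_two_mul_card_sdiff_or_exists_component {S P : Finset V} (IH : BoundBelow V #A)
    (hG : ¬ (K₃₃).IsMinorOf G) (hAB : Disjoint A B) (hdeg : ∀ b ∈ B, 3 ≤ #{a ∈ A | G.Adj b a})
    (hSA : S ⊆ A) (hS : #S ≤ 2) (hPB : P ⊆ B) (z : V → V)
    (hz : ∀ c ∈ P, ∀ a ∈ A \ S, G.Adj c a → a = z c) :
    #B ≤ 2 * #(A \ S) ∨
      ∃ K : ((⊤ : G.Subgraph).deleteVerts (↑S ∪ ↑P)).spanningCoe.ConnectedComponent,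
        ∀ a ∈ A \ S, a ∈ K.supp := by
  set H := ((⊤ : G.Subgraph).deleteVerts (↑S ∪ ↑P)).spanningCoe
  set κ := fun v => H.connectedComponentMk (if v ∈ P then z v else v)
  have hPA : ∀ a ∈ A, a ∉ P := fun a ha hP => Finset.disjoint_left.1 hAB ha (hPB hP)
  have hκA : ∀ a ∈ A, κ a = H.connectedComponentMk a := fun a ha => by simp [κ, hPA a ha]
  by_cases hsplit : ∀ t, ∃ a ∈ A \ S, κ a ≠ t
  · refine Or.inl (card_le_two_mul_card_sdiff_of_labelling IH hG hAB hdeg hSA hS κ ?_ hsplit)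
    intro b hb a ha hba
    rw [hκA a (mem_sdiff.1 ha).1]
    by_cases hbP : b ∈ P
    · simp only [κ, if_pos hbP, hz b hbP a ha hba]
    · have hbS : b ∉ S := fun h => Finset.disjoint_left.1 hAB (hSA h) hb
      have hH : H.Adj b a := by
        simp [H, hba, hbS, hbP, (mem_sdiff.1 ha).2, hPA a (mem_sdiff.1 ha).1]
      simp only [κ, if_neg hbP]
      exact ConnectedComponent.sound hH.reachable.symm
  · push Not at hsplit
    obtain ⟨K, hK⟩ := hsplit
    refine Or.inr ⟨K, fun a ha => ?_⟩
    rw [ConnectedComponent.mem_supp_iff, ← hK a ha, hκA a (mem_sdiff.1 ha).1]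

theorem exists_filter_adj_sdiff_eq_singleton {c : V} {S : Finset V}
    (hc : #{a ∈ A | G.Adj c a} = 3) (hS : S ⊆ {a ∈ A | G.Adj c a}) (hS2 : #S = 2) :
    ∃ z, {a ∈ A \ S | G.Adj c a} = {z} := by
  have hsd : {a ∈ A \ S | G.Adj c a} = {a ∈ A | G.Adj c a} \ S := by
    ext a; simp only [mem_filter, mem_sdiff]; tauto
  rw [← card_eq_one, hsd, card_sdiff_of_subset hS, hc, hS2]

theorem card_le_of_three_common_neighbors (IH : BoundBelow V #A) (hG : ¬ (K₃₃).IsMinorOf G)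
    (hAB : Disjoint A B) (hnbr : ∀ b ∈ B, ∀ v, G.Adj b v → v ∈ A)
    (hdeg : ∀ b ∈ B, #{a ∈ A | G.Adj b a} = 3) {x y : V} (hxy : x ≠ y)
    (hP : 3 ≤ #{b ∈ B | G.Adj b x ∧ G.Adj b y}) :
    #B ≤ 2 * #A - 4 := by
  set P := {b ∈ B | G.Adj b x ∧ G.Adj b y}
  set S : Finset V := {x, y}
  obtain ⟨r⟩ : Nonempty (Fin 3 ↪ P) := Embedding.nonempty_of_card_le (by simpa using hP)
  have hrP : ∀ j, (r j : V) ∈ P := fun j => (r j).2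
  have hPB : P ⊆ B := filter_subset _ _
  have hBA : ∀ b ∈ B, b ∉ A := fun b hb ha => Finset.disjoint_left.1 hAB ha hb
  have hSA : S ⊆ A := by
    obtain ⟨hB, hx, hy⟩ := mem_filter.1 (hrP 0)
    simp [S, insert_subset_iff, hnbr _ hB _ hx, hnbr _ hB _ hy]
  have hthird : ∀ c ∈ P, ∃ z, {a ∈ A \ S | G.Adj c a} = {z} := by
    intro c hc
    obtain ⟨hcB, hcx, hcy⟩ := mem_filter.1 hc
    refine exists_filter_adj_sdiff_eq_singleton (hdeg c hcB) ?_ (card_pair hxy)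
    simp [S, insert_subset_iff, hcx, hcy, hSA (mem_insert_self _ _),
      hSA (mem_insert_of_mem (mem_singleton_self _))]
  choose! z hz using hthird
  have hzA : ∀ c ∈ P, z c ∈ A \ S ∧ G.Adj c (z c) := fun c hc =>
    mem_filter.1 (by rw [hz c hc]; exact mem_singleton_self _)
  obtain hB | ⟨K, hK⟩ := card_le_two_mul_card_sdiff_or_exists_component IH hG hAB
    (fun b hb => (hdeg b hb).ge) hSA card_le_two hPB z fun c hc a ha hca =>
      mem_singleton.1 (hz c hc ▸ mem_filter.2 ⟨ha, hca⟩)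
  · rw [card_sdiff_of_subset hSA, card_pair hxy] at hB
    omega
  have hnotK : ∀ v ∈ S ∪ P, v ∉ K.supp := by
    intro v hv hvK
    obtain ⟨hzAS, -⟩ := hzA _ (hrP 0)
    obtain rfl := (K.reachable_of_mem_supp hvK (hK _ hzAS)).eq_of_forall_not_adj fun w hw => by
      simp_all
    rcases mem_union.1 hv with h | h
    exacts [(mem_sdiff.1 hzAS).2 h, hBA _ (hPB h) (mem_sdiff.1 hzAS).1]
  refine absurd (completeBipartiteGraph_isMinorOf_of_pair (r := fun j => (r j : V)) hxy
    ((ConnectedComponent.maximal_connected_induce_supp K).1.mono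
      (comap_monotone _ (Subgraph.spanningCoe_le _)))
    (hnotK x (by simp [S])) (hnotK y (by simp [S])) (Subtype.val_injective.comp r.injective)
    (fun j h => hBA _ (hPB (hrP j)) (h ▸ hSA (by simp [S])))
    (fun j h => hBA _ (hPB (hrP j)) (h ▸ hSA (by simp [S])))
    (fun j => hnotK _ (mem_union_right _ (hrP j))) fun j => ?_) hG
  obtain ⟨-, hx, hy⟩ := mem_filter.1 (hrP j)
  exact ⟨hx.symm, hy.symm, z (r j), hK _ (hzA _ (hrP j)).1, (hzA _ (hrP j)).2.symm⟩

theorem card_le_of_contract_star (IH : BoundBelow V #A) (hG : ¬ (K₃₃).IsMinorOf G)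
    (hAB : Disjoint A B) (hdeg : ∀ b ∈ B, 3 ≤ #{a ∈ A | G.Adj b a}) {b₀ b₁ x : V}
    {T : Finset V} (hb₀ : b₀ ∈ B) (hTA : T ⊆ A) (hT : ∀ t ∈ T, G.Adj b₀ t) (hx : x ∈ T)
    (hT2 : 2 ≤ #T)
    (hb₁ : ∀ b ∈ B, b ≠ b₀ → ∀ u ∈ T, ∀ v ∈ T, u ≠ v → G.Adj b u → G.Adj b v → b = b₁) :
    #B ≤ 2 * #A - 4 := by
  set X : Set V := insert b₀ ↑T
  set B' := (B.erase b₀).erase b₁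
  have hBA : ∀ b ∈ B, b ∉ A := fun b hb ha => Finset.disjoint_left.1 hAB ha hb
  have hQ : ¬ (K₃₃).IsMinorOf (G.map (collapse X x)) := fun h =>
    hG (h.of_map (by rintro (i | i); exacts [⟨Sum.inr 0, by simp⟩, ⟨Sum.inl 0, by simp⟩])
      (preconnected_induce_collapse_fiber (Set.mem_insert_of_mem _ hx)
        (preconnected_induce_insert_of_adj hT)))
  have hA' : #(A \ T.erase x) + #T = #A + 1 := by
    rw [card_sdiff_of_subset ((erase_subset _ _).trans hTA), card_erase_of_mem hx]
    have := card_le_card hTA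
    omega
  have hB : #B ≤ #B' + 2 := by
    have h₀ : #B - 1 ≤ #(B.erase b₀) := pred_card_le_card_erase
    have h₁ : #(B.erase b₀) - 1 ≤ #B' := pred_card_le_card_erase
    omega
  have hA3 : 3 ≤ #A := (hdeg b₀ hb₀).trans (card_le_card (filter_subset _ _))
  have := IH _ (A \ T.erase x) B' (by omega) hQ
    (hAB.mono sdiff_subset ((erase_subset _ _).trans (erase_subset _ _))) fun b hb => by
      obtain ⟨hbb₁, hbb₀, hbB⟩ := mem_erase.1 hb |>.imp_right mem_erase.1
      have hcount := card_filter_adj_le_card_filter_map_collapse_adj (hBA b₀ hb₀) (hBA b hbB)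
        hbb₀ hTA hx fun u hu v hv hbu hbv =>
          by_contra fun huv => hbb₁ (hb₁ b hbB hbb₀ u hu v hv huv hbu hbv)
      -- `congr` reconciles the decidability instances of the two filters
      exact (hdeg b hbB).trans (hcount.trans_eq (by congr))
  omega

theorem card_le_of_card_common_neighbors_eq_two (IH : BoundBelow V #A)
    (hG : ¬ (K₃₃).IsMinorOf G) (hAB : Disjoint A B) (hnbr : ∀ b ∈ B, ∀ v, G.Adj b v → v ∈ A)
    (hdeg : ∀ b ∈ B, 3 ≤ #{a ∈ A | G.Adj b a}) {x y : V} (hxy : x ≠ y)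
    (hP : #{b ∈ B | G.Adj b x ∧ G.Adj b y} = 2) :
    #B ≤ 2 * #A - 4 := by
  obtain ⟨b₀, b₁, -, hP⟩ := card_eq_two.1 hP
  have hb₀ : b₀ ∈ {b ∈ B | G.Adj b x ∧ G.Adj b y} := by rw [hP]; exact mem_insert_self _ _
  obtain ⟨hb₀B, hx, hy⟩ := mem_filter.1 hb₀
  refine card_le_of_contract_star IH hG hAB hdeg hb₀B (T := {x, y}) (b₁ := b₁)
    (by simp [insert_subset_iff, hnbr _ hb₀B _ hx, hnbr _ hb₀B _ hy]) (by simp [hx, hy])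
    (mem_insert_self x {y}) (card_pair hxy).ge ?_
  intro b hb hne u hu v hv huv hbu hbv
  have hbxy : G.Adj b x ∧ G.Adj b y := by
    simp only [mem_insert, mem_singleton] at hu hv
    rcases hu with rfl | rfl <;> rcases hv with rfl | rfl <;> simp_all
  have : b ∈ ({b₀, b₁} : Finset V) := hP ▸ mem_filter.2 ⟨hb, hbxy⟩
  simpa [hne] using this

theorem card_le_of_forall_card_common_neighbors_lt_two (IH : BoundBelow V #A)
    (hG : ¬ (K₃₃).IsMinorOf G) (hAB : Disjoint A B) (hdeg : ∀ b ∈ B, #{a ∈ A | G.Adj b a} = 3)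
    (hpair : ∀ x y, x ≠ y → #{b ∈ B | G.Adj b x ∧ G.Adj b y} < 2) :
    #B ≤ 2 * #A - 4 := by
  obtain rfl | ⟨b₀, hb₀⟩ := B.eq_empty_or_nonempty
  · simp
  obtain ⟨x, hx⟩ : {a ∈ A | G.Adj b₀ a}.Nonempty := card_pos.1 (by rw [hdeg b₀ hb₀]; norm_num)
  refine card_le_of_contract_star IH hG hAB (fun b hb => (hdeg b hb).ge) hb₀ (b₁ := b₀)
    (filter_subset _ _) (fun t ht => (mem_filter.1 ht).2) hx (by rw [hdeg b₀ hb₀]; norm_num) ?_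
  intro b hb hne u hu v hv huv hbu hbv
  have hsub : ({b, b₀} : Finset V) ⊆ {b ∈ B | G.Adj b u ∧ G.Adj b v} := by
    simp [insert_subset_iff, hb, hb₀, hbu, hbv, (mem_filter.1 hu).2, (mem_filter.1 hv).2]
  have := (card_le_card hsub).trans_lt (hpair u v huv)
  rw [card_pair hne] at this
  omega

theorem card_le_two_mul_card_sub_four (hG : ¬ (K₃₃).IsMinorOf G) (hAB : Disjoint A B)
    (hdeg : ∀ b ∈ B, 3 ≤ #{a ∈ A | G.Adj b a}) :
    #B ≤ 2 * #A - 4 := by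
  induction hn : #A using Nat.strong_induction_on generalizing G A B with
  | _ n IH =>
  subst hn
  have IH' : BoundBelow V #A := fun G' A' B' hlt hG' hAB' hdeg' => IH _ hlt hG' hAB' hdeg' rfl
  obtain ⟨G₀, hle, hnbr, hdeg₀⟩ := exists_le_card_filter_adj_eq_three hAB hdeg
  have hG₀ : ¬ (K₃₃).IsMinorOf G₀ := fun h => hG (h.mono hle)
  by_cases hpair : ∃ x y, x ≠ y ∧ 2 ≤ #{b ∈ B | G₀.Adj b x ∧ G₀.Adj b y}
  · obtain ⟨x, y, hxy, h2⟩ := hpair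
    obtain h3 | h2' := le_or_gt 3 #{b ∈ B | G₀.Adj b x ∧ G₀.Adj b y}
    · exact card_le_of_three_common_neighbors IH' hG₀ hAB hnbr hdeg₀ hxy h3
    · exact card_le_of_card_common_neighbors_eq_two IH' hG₀ hAB hnbr (fun b hb => (hdeg₀ b hb).ge)
        hxy (by omega)
  · push Not at hpair
    exact card_le_of_forall_card_common_neighbors_lt_two IH' hG₀ hAB hdeg₀ hpair

end SimpleGraph

theorem critical_cloud_bound_general {V : Type*} [Fintype V] (G : SimpleGraph V)
    (hplanar : G.IsPlanar) (Big Crit : Set V)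
    (hdisj : Disjoint Big Crit)
    (hedges : ∀ u v, G.Adj u v → (u ∈ Big ∧ v ∈ Crit) ∨ (u ∈ Crit ∧ v ∈ Big))
    (hdeg : ∀ v ∈ Crit, 3 ≤ (G.neighborSet v).ncard) :
    Crit.ncard ≤ 2 * Big.ncard - 4 := by
  classical
  have hnbr : ∀ v ∈ Crit, G.neighborSet v = ↑{a ∈ Big.toFinset | G.Adj v a} := by
    intro v hv
    ext a
    simp only [SimpleGraph.mem_neighborSet, coe_filter, Set.mem_toFinset, Set.mem_ofPred_eq,
      iff_and_self]
    intro hva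
    rcases hedges v a hva with ⟨h, -⟩ | ⟨-, h⟩
    exacts [absurd hv (Set.disjoint_left.1 hdisj h), h]
  rw [Set.ncard_eq_toFinset_card', Set.ncard_eq_toFinset_card']
  refine SimpleGraph.card_le_two_mul_card_sub_four hplanar.2 (Set.disjoint_toFinset.2 hdisj)
    fun b hb => ?_
  rw [← Set.ncard_coe_finset, ← hnbr b (Set.mem_toFinset.1 hb)]
  exact hdeg b (Set.mem_toFinset.1 hb)

/-- In a bipartite planar graph whose vertices are partitioned into `k` big vertices and
`ℓ` critical vertices, with all edges joining big to critical, and every critical vertex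
of degree at least 3, we have `ℓ ≤ 2k - 4`. -/
theorem critical_cloud_bound {V : Type*} [Fintype V] (G : SimpleGraph V)
    (hplanar : G.IsPlanar) (Big Crit : Set V)
    (hdisj : Disjoint Big Crit) (hcover : Big ∪ Crit = Set.univ)
    (hedges : ∀ u v, G.Adj u v → (u ∈ Big ∧ v ∈ Crit) ∨ (u ∈ Crit ∧ v ∈ Big))
    (hdeg : ∀ v ∈ Crit, 3 ≤ (G.neighborSet v).ncard) :
    Crit.ncard ≤ 2 * Big.ncard - 4 :=
  critical_cloud_bound_general G hplanar Big Crit hdisj hedges hdeg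
end

section
/- Every graph G in which every vertex-induced subgraph has at most b times as many edges as vertices admits an orientation of its edges in which every vertex has out-degree at most 2b. -/
/-!
Averaging the handshake identity over an induced subgraph on `s` shows that some vertex of `s`
has at most `2b` neighbours in `s`, i.e. the graph is `2b`-degenerate. Repeatedly removing such a
vertex ranks the vertices so that each has at most `2b` neighbours of higher rank; orienting every
edge from lower to higher rank gives the required orientation.
-/

open Finset

namespace SimpleGraph

variable {V : Type*}

lemma exists_degree_le_two_mul_of_card_edgeFinset_le [Fintype V] [Nonempty V] (G : SimpleGraph V)
    [DecidableRel G.Adj] {b : ℕ} (h : #G.edgeFinset ≤ b * Fintype.card V) :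
    ∃ v, G.degree v ≤ 2 * b := by
  obtain ⟨v, -, hv⟩ := exists_le_of_sum_le (f := fun v ↦ G.degree v) (g := fun _ ↦ 2 * b)
    univ_nonempty <| by
      rw [sum_degrees_eq_twice_card_edges, sum_const, card_univ, smul_eq_mul]
      linarith
  exact ⟨v, hv⟩

lemma degree_induce_coe_finset [Fintype V] [DecidableEq V] (G : SimpleGraph V) [DecidableRel G.Adj]
    (s : Finset V) (v : (s : Set V)) :
    (G.induce (s : Set V)).degree v = #{w ∈ s | G.Adj v w} := by
  rw [← card_neighborFinset_eq_degree, ← card_map (.subtype _)]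
  congr 1
  ext w
  simp [and_comm]

lemma exists_card_adj_le_of_card_edgeSet_induce_le [Fintype V] [DecidableEq V] (G : SimpleGraph V)
    [DecidableRel G.Adj] {b : ℕ} {s : Finset V} (hs : s.Nonempty)
    (h : (G.induce (s : Set V)).edgeSet.ncard ≤ b * #s) :
    ∃ v ∈ s, #{w ∈ s | G.Adj v w} ≤ 2 * b := by
  have : Nonempty (s : Set V) := hs.to_subtype
  rw [Set.ncard_eq_toFinset_card', ← edgeFinset] at h
  obtain ⟨⟨v, hv⟩, hdeg⟩ := (G.induce (s : Set V)).exists_degree_le_two_mul_of_card_edgeFinset_le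
    (b := b) (by simpa using h)
  exact ⟨v, hv, degree_induce_coe_finset G s ⟨v, hv⟩ ▸ hdeg⟩

lemma exists_injOn_rank_of_degenerate [DecidableEq V] (G : SimpleGraph V) [DecidableRel G.Adj]
    {d : ℕ} (hdeg : ∀ s : Finset V, s.Nonempty → ∃ v ∈ s, #{w ∈ s | G.Adj v w} ≤ d)
    (s : Finset V) :
    ∃ f : V → ℕ, Set.InjOn f s ∧ ∀ v ∈ s, #{w ∈ s | G.Adj v w ∧ f v < f w} ≤ d := by
  induction s using Finset.strongInduction with | H s ih =>
  rcases s.eq_empty_or_nonempty with rfl | hs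
  · exact ⟨fun _ ↦ 0, by simp, by simp⟩
  obtain ⟨v, hv, hv_deg⟩ := hdeg s hs
  obtain ⟨f, hf_inj, hf_deg⟩ := ih (s.erase v) (erase_ssubset hv)
  -- `v` is ranked below every other vertex of `s`, so it is the tail of all its edges
  refine ⟨fun w ↦ if w = v then 0 else f w + 1, fun x hx y hy hxy ↦ ?_, fun w hw ↦ ?_⟩
  · by_cases hxv : x = v <;> by_cases hyv : y = v
    · exact hxv.trans hyv.symm
    · simp [hxv, hyv] at hxy
    · simp [hxv, hyv] at hxy
    · simp only [hxv, hyv, if_false, add_left_inj] at hxy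
      exact hf_inj (mem_erase.2 ⟨hxv, hx⟩) (mem_erase.2 ⟨hyv, hy⟩) hxy
  by_cases hwv : w = v
  · subst hwv
    exact (card_le_card (monotone_filter_right _ fun _ _ ↦ And.left)).trans hv_deg
  · convert hf_deg w (mem_erase.2 ⟨hwv, hw⟩) using 2
    ext x
    by_cases hxv : x = v <;> simp [hxv, hwv]

lemma exists_injective_rank_of_degenerate [Fintype V] (G : SimpleGraph V) [DecidableRel G.Adj]
    {d : ℕ} (hdeg : ∀ s : Finset V, s.Nonempty → ∃ v ∈ s, #{w ∈ s | G.Adj v w} ≤ d) :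
    ∃ f : V → ℕ, Function.Injective f ∧ ∀ v, #{w | G.Adj v w ∧ f v < f w} ≤ d := by
  classical
  obtain ⟨f, hf_inj, hf_deg⟩ := exists_injOn_rank_of_degenerate G hdeg univ
  exact ⟨f, Set.injOn_univ.1 (by simpa using hf_inj), fun v ↦ hf_deg v (mem_univ v)⟩

end SimpleGraph

/-- Every graph in which every vertex-induced subgraph has at most `b` times as many
edges as vertices admits an orientation of its edges with out-degree at most `2b`. -/
theorem bounded_density_orientation {V : Type*} [Fintype V] (G : SimpleGraph V) (b : ℕ)
    (hdens : ∀ s : Set V, (G.induce s).edgeSet.ncard ≤ b * s.ncard) :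
    ∃ r : V → V → Prop,
      (∀ u v, G.Adj u v ↔ (r u v ∨ r v u)) ∧
      (∀ u v, r u v → ¬ r v u) ∧
      (∀ v, {u | r v u}.ncard ≤ 2 * b) := by
  classical
  obtain ⟨f, hf_inj, hf_deg⟩ := G.exists_injective_rank_of_degenerate fun s hs ↦
    G.exists_card_adj_le_of_card_edgeSet_induce_le hs (by simpa using hdens s)
  refine ⟨fun u v ↦ G.Adj u v ∧ f u < f v, fun u v ↦ ⟨fun h ↦ ?_, ?_⟩,
    fun u v h h' ↦ h.2.not_gt h'.2, fun v ↦ ?_⟩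
  · rcases (hf_inj.ne h.ne).lt_or_gt with hlt | hlt
    exacts [Or.inl ⟨h, hlt⟩, Or.inr ⟨h.symm, hlt⟩]
  · rintro (h | h)
    exacts [h.1, h.1.symm]
  · simpa [Set.ncard_eq_toFinset_card'] using hf_deg v
end

section
/- Let G be a connected graph on n vertices and k a positive integer with k ≤ n. Then there exists a partition of V(G) into parts each inducing a connected subgraph of G, such that each part has size at most k, and any part of size strictly less than k is not adjacent to another part of size strictly less than k. -/
/-!
Peel off clouds greedily: from the remaining vertex set `S` remove a set `T` that is maximal
(by size) among the connected subsets of `S` with at most `k` vertices. If `|T| < k`, no vertex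
of `S \ T` is adjacent to `T`, since adding it would give a larger such set; hence a small
cloud is never adjacent to a cloud chosen after it.
-/

open Finset

namespace SimpleGraph

variable {V : Type*} {G : SimpleGraph V}

lemma Connected.induce_insert {s : Set V} {u w : V} (hs : (G.induce s).Connected) (hu : u ∈ s)
    (huw : G.Adj u w) : (G.induce (insert w s)).Connected := by
  have hsw : s ∪ {u, w} = insert w s := by
    ext x
    simp only [Set.mem_union, Set.mem_insert_iff, Set.mem_singleton_iff]
    constructor
    · rintro (hx | rfl | rfl) <;> tauto
    · tauto
  rw [← hsw]
  exact induce_union_connected hs.preconnected (induce_pair_connected_of_adj huw).preconnected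
    ⟨u, hu, Set.mem_insert u _⟩

lemma connected_induce_singleton (v : V) : (G.induce {v}).Connected := by
  rw [induce_singleton_eq_top]
  exact connected_top

variable [DecidableEq V]

def IsCloudPartition (G : SimpleGraph V) (k : ℕ) {S : Finset V} (P : Finpartition S) : Prop :=
  (∀ p ∈ P.parts, (G.induce (↑p : Set V)).Connected ∧ p.card ≤ k) ∧
    (∀ p ∈ P.parts, ∀ q ∈ P.parts, p ≠ q → p.card < k → q.card < k →
      ¬ ∃ u ∈ p, ∃ v ∈ q, G.Adj u v)

lemma exists_cloud_subset {k : ℕ} (hk : 0 < k) {S : Finset V} (hS : S.Nonempty) :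
    ∃ T ⊆ S, (G.induce (T : Set V)).Connected ∧ T.card ≤ k ∧
      (T.card < k → ∀ u ∈ T, ∀ w ∈ S \ T, ¬ G.Adj u w) := by
  classical
  obtain ⟨v, hv⟩ := hS
  set clouds :=
    S.powerset.filter fun T : Finset V => (G.induce (T : Set V)).Connected ∧ T.card ≤ k
  have hv_cloud : {v} ∈ clouds := by
    simp only [clouds, mem_filter, mem_powerset, singleton_subset_iff, card_singleton]
    refine ⟨hv, ?_, hk⟩
    rw [coe_singleton]
    exact connected_induce_singleton v
  obtain ⟨T, hT, hT_max⟩ := clouds.exists_max_image card ⟨{v}, hv_cloud⟩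
  simp only [clouds, mem_filter, mem_powerset] at hT hT_max
  obtain ⟨hTS, hT_conn, hTk⟩ := hT
  refine ⟨T, hTS, hT_conn, hTk, fun hTk' u hu w hw huw => ?_⟩
  rw [mem_sdiff] at hw
  have h_insert_conn : (G.induce (insert w T : Finset V)).Connected := by
    rw [coe_insert]
    exact hT_conn.induce_insert (mem_coe.2 hu) huw
  have h_le := hT_max (insert w T)
    ⟨insert_subset hw.1 hTS, h_insert_conn, (card_insert_le w T).trans hTk'⟩
  rw [card_insert_of_notMem hw.2] at h_le
  omega

lemma exists_isCloudPartition {k : ℕ} (hk : 0 < k) (S : Finset V) :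
    ∃ P : Finpartition S, G.IsCloudPartition k P := by
  induction S using Finset.strongInduction with
  | _ S ih =>
  rcases S.eq_empty_or_nonempty with rfl | hS
  · exact ⟨Finpartition.empty _, by simp [IsCloudPartition, Finpartition.empty]⟩
  obtain ⟨T, hTS, hT_conn, hTk, hT_closed⟩ := exists_cloud_subset (G := G) hk hS
  have hT_ne : T.Nonempty := by simpa [Finset.Nonempty] using hT_conn.nonempty
  obtain ⟨P, hP_conn, hP_adj⟩ := ih (S \ T) (sdiff_ssubset hTS hT_ne)
  refine ⟨P.extend hT_ne.ne_empty sdiff_disjoint (sdiff_union_of_subset hTS), ?_, ?_⟩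
  · simp only [Finpartition.extend_parts, forall_mem_insert]
    exact ⟨⟨hT_conn, hTk⟩, hP_conn⟩
  · simp only [Finpartition.extend_parts, mem_insert]
    rintro p (rfl | hp) q (rfl | hq) hpq hpk hqk ⟨u, hu, w, hw, huw⟩
    · exact hpq rfl
    · exact hT_closed hpk u hu w (P.le hq hw) huw
    · exact hT_closed hqk w hw u (P.le hp hu) huw.symm
    · exact hP_adj p hp q hq hpq hpk hqk ⟨u, hu, w, hw, huw⟩

end SimpleGraph

theorem cloud_partition_exists_general {V : Type*} [Fintype V] [DecidableEq V]
    (G : SimpleGraph V)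
    (k : ℕ) (hk : 0 < k) :
    ∃ P : Finpartition (Finset.univ : Finset V),
      (∀ p ∈ P.parts, (G.induce (↑p : Set V)).Connected ∧ p.card ≤ k) ∧
      (∀ p ∈ P.parts, ∀ q ∈ P.parts, p ≠ q → p.card < k → q.card < k →
        ¬ ∃ u ∈ p, ∃ v ∈ q, G.Adj u v) :=
  G.exists_isCloudPartition hk univ

/-- Existence of cloud partitions: every connected graph on `n` vertices admits, for any
`0 < k ≤ n`, a partition of its vertex set into connected parts of size at most `k` such
that no two parts of size strictly less than `k` are adjacent. -/
theorem cloud_partition_exists {V : Type*} [Fintype V] [DecidableEq V]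
    (G : SimpleGraph V) (hconn : G.Connected)
    (k : ℕ) (hk : 0 < k) (hkn : k ≤ Fintype.card V) :
    ∃ P : Finpartition (Finset.univ : Finset V),
      (∀ p ∈ P.parts, (G.induce (↑p : Set V)).Connected ∧ p.card ≤ k) ∧
      (∀ p ∈ P.parts, ∀ q ∈ P.parts, p ≠ q → p.card < k → q.card < k →
        ¬ ∃ u ∈ p, ∃ v ∈ q, G.Adj u v) :=
  cloud_partition_exists_general G k hk
end
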